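/- arXiv:1210.1903 — 2 statements merged into one kernel-verified Lean document; each statement's English description precedes it below -/
import Mathlib

section
/- Let M be a 2n×2n complex skew-symmetric matrix (M* = -M) and T a 2n×n complex matrix of rank n with T*MT = 0. Then for any 2n×n complex matrix S, det(S*MT) = (-1)^n · det(T|S) · Pf(M), where Pf(M) is the Pfaffian of M. -/
/-!
For `J = (T|S)`, skew-symmetry of `M` and `TᵀMT = 0` give the block form
`JᵀMJ = [[0, -(SᵀMT)ᵀ], [SᵀMT, SᵀMS]]`, whence `det(SᵀMT)² = det(T|S)² det M` for every `S`.
Taking a square root `c` of `det M`, a sign `±c` that works for all `S` at once is found by applying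
this identity to the generic matrix `S = (X i j)` over the polynomial ring: there it reads
`P² = (c Q)²` in an integral domain, so `P = ±c Q`, and specialising the indeterminates gives the
claim for each `S`.
-/

open Matrix

/-- The `2n × 2n` matrix obtained by juxtaposing the columns of two `2n × n` matrices. -/
noncomputable def juxt {n : ℕ} (T S : Matrix (Fin (n + n)) (Fin n) ℂ) :
    Matrix (Fin (n + n)) (Fin (n + n)) ℂ :=
  (Matrix.fromCols T S).submatrix id finSumFinEquiv.symm

namespace Matrix

variable {R : Type*} [CommRing R] {ι m : Type*} [Fintype ι] [Fintype m] [DecidableEq m]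

theorem det_fromBlocks_zero_one_one_zero :
    (fromBlocks 0 1 1 0 : Matrix (m ⊕ m) (m ⊕ m) R).det = (-1) ^ Fintype.card m := by
  have h : (fromBlocks 1 1 0 1 : Matrix (m ⊕ m) (m ⊕ m) R) * fromBlocks 0 1 1 0 =
      fromBlocks 1 1 1 0 := by
    simp [fromBlocks_multiply]
  simpa [det_mul, det_fromBlocks_zero₂₁, det_fromBlocks_one₁₁, det_neg] using congrArg det h

theorem det_fromBlocks_zero₁₁ (B C D : Matrix m m R) :
    (fromBlocks 0 B C D).det = (-1) ^ Fintype.card m * B.det * C.det := by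
  have h : fromBlocks B 0 D C * fromBlocks 0 1 1 0 = fromBlocks 0 B C D := by
    simp [fromBlocks_multiply]
  rw [← h, det_mul, det_fromBlocks_zero₁₂, det_fromBlocks_zero_one_one_zero]
  ring

theorem det_transpose_mul_mul_fromCols {M : Matrix ι ι R} (hM : Mᵀ = -M)
    {T : Matrix ι m R} (hT : Tᵀ * M * T = 0) (S : Matrix ι m R) :
    ((fromCols T S)ᵀ * M * fromCols T S).det = (Sᵀ * M * T).det ^ 2 := by
  have hTMS : Tᵀ * M * S = -(Sᵀ * M * T)ᵀ := by
    simp [transpose_mul, hM, Matrix.mul_assoc]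
  have hblocks : (fromCols T S)ᵀ * M * fromCols T S =
      fromBlocks 0 (-(Sᵀ * M * T)ᵀ) (Sᵀ * M * T) (Sᵀ * M * S) := by
    rw [transpose_fromCols, Matrix.mul_assoc, mul_fromCols, fromRows_mul_fromCols,
      ← Matrix.mul_assoc, ← Matrix.mul_assoc, ← Matrix.mul_assoc, ← Matrix.mul_assoc, hT, hTMS]
  rw [hblocks, det_fromBlocks_zero₁₁, det_neg, det_transpose, ← mul_assoc, ← pow_add,
    Even.neg_one_pow ⟨_, rfl⟩, one_mul, sq]

theorem det_transpose_mul_mul_sq [DecidableEq ι] {M : Matrix ι ι R} (hM : Mᵀ = -M)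
    {T : Matrix ι m R} (hT : Tᵀ * M * T = 0) (e : m ⊕ m ≃ ι) (S : Matrix ι m R) :
    (Sᵀ * M * T).det ^ 2 = ((fromCols T S).submatrix id e.symm).det ^ 2 * M.det := by
  have hJ : ((fromCols T S).submatrix id e.symm)ᵀ * M * (fromCols T S).submatrix id e.symm =
      ((fromCols T S)ᵀ * M * fromCols T S).submatrix e.symm e.symm := by
    ext i j
    simp only [mul_apply, submatrix_apply, transpose_apply, id]
  rw [← det_transpose_mul_mul_fromCols hM hT S, ← det_submatrix_equiv_self e.symm, ← hJ,
    det_mul, det_mul, det_transpose]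
  ring

theorem exists_det_transpose_mul_mul_eq_det_mul [IsDomain R] [DecidableEq ι] {M : Matrix ι ι R}
    (hM : Mᵀ = -M) {T : Matrix ι m R} (hT : Tᵀ * M * T = 0) (e : m ⊕ m ≃ ι) {c : R}
    (hc : c ^ 2 = M.det) :
    ∃ d : R, d ^ 2 = M.det ∧ ∀ S : Matrix ι m R,
      (Sᵀ * M * T).det = ((fromCols T S).submatrix id e.symm).det * d := by
  let φ : R →+* MvPolynomial (ι × m) R := MvPolynomial.C
  let X : Matrix ι m (MvPolynomial (ι × m) R) := of fun i j => MvPolynomial.X (i, j)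
  have hMC : (M.map φ)ᵀ = -M.map φ := by
    rw [← transpose_map, hM, Matrix.map_neg _ (map_neg φ)]
  have hTC : (T.map φ)ᵀ * M.map φ * T.map φ = 0 := by
    rw [← transpose_map, ← Matrix.map_mul, ← Matrix.map_mul, hT, Matrix.map_zero _ (map_zero φ)]
  obtain ⟨d, hd, hgeneric⟩ : ∃ d : R, d ^ 2 = M.det ∧ (Xᵀ * M.map φ * T.map φ).det =
      ((fromCols (T.map φ) X).submatrix id e.symm).det * φ d := by
    have hsq := det_transpose_mul_mul_sq hMC hTC e X
    rw [show (M.map φ).det = φ M.det from (φ.map_det M).symm, ← hc, map_pow, ← mul_pow] at hsq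
    rcases sq_eq_sq_iff_eq_or_eq_neg.1 hsq with h | h
    · exact ⟨c, hc, h⟩
    · exact ⟨-c, by rw [neg_sq, hc], by rw [h, map_neg, mul_neg]⟩
  refine ⟨d, hd, fun S => ?_⟩
  let ψ := MvPolynomial.eval fun p : ι × m => S p.1 p.2
  have hX : X.map ψ = S := by ext; simp [X, ψ]
  have hψφ : ⇑ψ ∘ ⇑φ = id := funext fun _ => MvPolynomial.eval_C _
  have h := congrArg ψ hgeneric
  simp only [RingHom.map_det, _root_.map_mul, RingHom.mapMatrix_apply] at h
  simpa [Matrix.map_mul, transpose_map, fromCols_map, ← submatrix_map, hX, hψφ, φ, ψ] using h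

end Matrix

theorem stmt1_general (n : ℕ) (M : Matrix (Fin (n + n)) (Fin (n + n)) ℂ)
    (hM : Mᵀ = -M)
    (T : Matrix (Fin (n + n)) (Fin n) ℂ)
    (hTMT : Tᵀ * M * T = 0) :
    ∃ pf : ℂ, pf ^ 2 = M.det ∧
      ∀ S : Matrix (Fin (n + n)) (Fin n) ℂ,
        (Sᵀ * M * T).det = (-1 : ℂ) ^ n * (juxt T S).det * pf := by
  obtain ⟨c, hc⟩ := IsAlgClosed.exists_pow_nat_eq M.det two_pos
  obtain ⟨d, hd, hdet⟩ := exists_det_transpose_mul_mul_eq_det_mul hM hTMT finSumFinEquiv hc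
  have hsign : ((-1 : ℂ) ^ n) ^ 2 = 1 := by rw [← pow_mul, pow_mul', neg_one_sq, one_pow]
  refine ⟨(-1) ^ n * d, by rw [mul_pow, hsign, one_mul, hd], fun S => ?_⟩
  rw [hdet S, juxt]
  linear_combination (-((fromCols T S).submatrix id finSumFinEquiv.symm).det * d) * hsign

/-- if `M` is skew-symmetric (`Mᵀ = -M`) and `T` has rank `n` with
`Tᵀ M T = 0`, then there is a scalar `pf` (the Pfaffian of `M`, so `pf ^ 2 = det M`)
such that for every `S`, `det(Sᵀ M T) = (-1)^n det(T|S) pf`. -/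
theorem stmt1 (n : ℕ) (M : Matrix (Fin (n + n)) (Fin (n + n)) ℂ)
    (hM : Mᵀ = -M)
    (T : Matrix (Fin (n + n)) (Fin n) ℂ) (hT : T.rank = n)
    (hTMT : Tᵀ * M * T = 0) :
    ∃ pf : ℂ, pf ^ 2 = M.det ∧
      ∀ S : Matrix (Fin (n + n)) (Fin n) ℂ,
        (Sᵀ * M * T).det = (-1 : ℂ) ^ n * (juxt T S).det * pf :=
  stmt1_general n M hM T hTMT
end

section
/- Let M be a 2n×2n complex matrix of rank 2n−1 and T a 2n×n complex matrix of rank n with TᵀMT = 0. If S is a 2n×n complex matrix with det(SᵀMT) = 0 and the 2n×2n matrix (T|S) is invertible, then the right kernel of M (the one-dimensional kernel of the linear map v ↦ Mv) is contained in the column span of T. -/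
open Matrix

/-!
Take `w ≠ 0` with `Sᵀ M T w = 0`. Since `Tᵀ M T = 0` as well, `(T|S)ᵀ M (T w) = 0`, and the
invertibility of `T|S` gives `M (T w) = 0`, with `T w ≠ 0` because the columns of `T` are part of
a basis. As the kernel of `M` is a line, it is spanned by `T w`.
-/

namespace Matrix

section FromCols

variable {K m n p : Type*} [Field K] [Fintype m] [DecidableEq m]
  {T : Matrix m n K} {S : Matrix m p K} {e : m ≃ n ⊕ p}

theorem mulVec_injective_of_isUnit_fromCols_submatrix [Fintype n] [Fintype p]
    (h : IsUnit ((fromCols T S).submatrix id e)) : Function.Injective T.mulVec := by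
  have hT : ∀ c, T *ᵥ c = (fromCols T S).submatrix id e *ᵥ (Sum.elim c 0 ∘ e) := fun c => by
    simp only [submatrix_mulVec_equiv, Function.comp_assoc, e.self_comp_symm, Function.comp_id,
      fromCols_mulVec_sumElim, mulVec_zero, add_zero]
  intro c c' hcc'
  have hx := (mulVec_injective_iff_isUnit.mpr h) ((hT c).symm.trans (hcc'.trans (hT c')))
  funext i
  simpa using congrFun hx (e.symm (.inl i))

theorem eq_zero_of_transpose_mulVec_eq_zero_of_isUnit_fromCols_submatrix
    (h : IsUnit ((fromCols T S).submatrix id e)) {x : m → K}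
    (hTx : Tᵀ *ᵥ x = 0) (hSx : Sᵀ *ᵥ x = 0) : x = 0 := by
  have hx : x ᵥ* (fromCols T S).submatrix id e = 0 := by
    change (x ᵥ* fromCols T S) ∘ e = 0
    rw [vecMul_fromCols, ← mulVec_transpose, ← mulVec_transpose, hTx, hSx, Sum.elim_zero_zero,
      Pi.zero_comp]
  exact (vecMul_injective_iff_isUnit.mpr h) (hx.trans (zero_vecMul _).symm)

end FromCols

theorem exists_smul_eq_of_rank_eq_card_sub_one {K m : Type*} [Field K] [Fintype m]
    {M : Matrix m m K} (hM : M.rank = Fintype.card m - 1) {u v : m → K}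
    (hu : M *ᵥ u = 0) (hu0 : u ≠ 0) (hv : M *ᵥ v = 0) : ∃ a : K, a • u = v := by
  obtain ⟨i, -⟩ := Function.ne_iff.mp hu0
  have hcard : 0 < Fintype.card m := Fintype.card_pos_iff.mpr ⟨i⟩
  have hker : Module.finrank K (LinearMap.ker M.mulVecLin) = 1 := by
    have := LinearMap.finrank_range_add_finrank_ker M.mulVecLin
    rw [Module.finrank_fintype_fun_eq_card] at this
    change M.rank + _ = _ at this
    omega
  have hspan := eq_span_singleton_of_mem_of_finrank_eq_one hker hu hu0
  exact Submodule.mem_span_singleton.mp (hspan ▸ hv)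

end Matrix

theorem stmt2_general (n : ℕ) (M : Matrix (Fin (n + n)) (Fin (n + n)) ℂ)
    (hM : M.rank = n + n - 1)
    (T : Matrix (Fin (n + n)) (Fin n) ℂ)
    (hTMT : Tᵀ * M * T = 0)
    (S : Matrix (Fin (n + n)) (Fin n) ℂ)
    (hS : (Sᵀ * M * T).det = 0)
    (hTS : IsUnit (juxt T S)) :
    ∀ v : Fin (n + n) → ℂ, M.mulVec v = 0 → ∃ c : Fin n → ℂ, v = T.mulVec c := by
  intro v hv
  obtain ⟨w, hw0, hw⟩ := exists_mulVec_eq_zero_iff.mpr hS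
  have hMTw : M *ᵥ (T *ᵥ w) = 0 := by
    refine eq_zero_of_transpose_mulVec_eq_zero_of_isUnit_fromCols_submatrix hTS ?_ ?_
    · rw [mulVec_mulVec, mulVec_mulVec, hTMT, zero_mulVec]
    · rwa [mulVec_mulVec, mulVec_mulVec]
  have hTw : T *ᵥ w ≠ 0 := fun h =>
    hw0 (mulVec_injective_of_isUnit_fromCols_submatrix hTS (h.trans (mulVec_zero T).symm))
  obtain ⟨a, ha⟩ := exists_smul_eq_of_rank_eq_card_sub_one (by simpa using hM) hMTw hTw hv
  exact ⟨a • w, by rw [mulVec_smul, ha]⟩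

/-- if `M` has rank `2n - 1`, `T` has rank `n`, `Tᵀ M T = 0`,
`det(Sᵀ M T) = 0` and `T|S` is invertible, then the right kernel of `M`
is contained in the column span of `T`. -/
theorem stmt2 (n : ℕ) (M : Matrix (Fin (n + n)) (Fin (n + n)) ℂ)
    (hM : M.rank = n + n - 1)
    (T : Matrix (Fin (n + n)) (Fin n) ℂ) (hT : T.rank = n)
    (hTMT : Tᵀ * M * T = 0)
    (S : Matrix (Fin (n + n)) (Fin n) ℂ)
    (hS : (Sᵀ * M * T).det = 0)
    (hTS : IsUnit (juxt T S)) :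
    ∀ v : Fin (n + n) → ℂ, M.mulVec v = 0 → ∃ c : Fin n → ℂ, v = T.mulVec c :=
  stmt2_general n M hM T hTMT S hS hTS
end
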